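/- Let c : ℝ⁶ × ℝ⁶ → ℝ⁶ be the alternating bilinear map with c(e₁,e₂) = e₅, c(e₁,e₄) = e₆, c(e₂,e₃) = e₆, and c(eᵢ,eⱼ) = 0 for all other pairs i < j (the Lie algebra with structure equations (0,0,0,0,12,14+23)), and let c̃ be the alternating bilinear map with c̃(e₁,e₂) = e₅, c̃(e₁,e₃) = e₆, and c̃(eᵢ,eⱼ) = 0 otherwise (the Lie algebra n₅ ⊕ ℝ). Then there exists a family gₛ ∈ GL(6, ℝ), s ∈ (0,1], such that for all x, y ∈ ℝ⁶ the brackets (gₛ · c)(x, y) := gₛ c(gₛ⁻¹x, gₛ⁻¹y) converge to c̃(x, y) as s → 0. In other words, (0,0,0,0,12,14+23) degenerates to n₅ ⊕ ℝ. -/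
import Mathlib


/-- The bracket of the Lie algebra `(0,0,0,0,12,14+23)`:
`c(e₁,e₂) = e₅`, `c(e₁,e₄) = e₆ = c(e₂,e₃)`. -/
noncomputable def cA (x y : Fin 6 → ℝ) : Fin 6 → ℝ :=
  (x 0 * y 1 - x 1 * y 0) • (Pi.single 4 1 : Fin 6 → ℝ) +
  (x 0 * y 3 - x 3 * y 0 + x 1 * y 2 - x 2 * y 1) • (Pi.single 5 1 : Fin 6 → ℝ)

/-- The bracket of `n₅ ⊕ ℝ = (0,0,0,0,12,13)`: `c̃(e₁,e₂) = e₅`, `c̃(e₁,e₃) = e₆`. -/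
noncomputable def cN5R (x y : Fin 6 → ℝ) : Fin 6 → ℝ :=
  (x 0 * y 1 - x 1 * y 0) • (Pi.single 4 1 : Fin 6 → ℝ) +
  (x 0 * y 2 - x 2 * y 0) • (Pi.single 5 1 : Fin 6 → ℝ)

/-- Linear map swapping coordinates 2 and 3 with scales `a`, `b`. -/
noncomputable def gLin (a b : ℝ) : (Fin 6 → ℝ) →ₗ[ℝ] (Fin 6 → ℝ) where
  toFun x := fun i => if i = 2 then a * x 3 else if i = 3 then b * x 2 else x i
  map_add' x y := by funext i; dsimp; split_ifs <;> simp [mul_add] 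
  map_smul' c x := by funext i; dsimp; split_ifs <;> (try simp only [Pi.smul_apply, smul_eq_mul]) <;> (try ring)

noncomputable def gEquiv (t : ℝ) (ht : t ≠ 0) : (Fin 6 → ℝ) ≃ₗ[ℝ] (Fin 6 → ℝ) :=
  LinearEquiv.ofLinear (gLin 1 (1/t)) (gLin t 1)
    (by ext x i; fin_cases i <;> simp [gLin] <;> field_simp)
    (by ext x i; fin_cases i <;> simp [gLin] <;> field_simp)




lemma gEquiv_key (s : ℝ) (hs : s ≠ 0) (x y : Fin 6 → ℝ) :
    gEquiv s hs (cA ((gEquiv s hs).symm x) ((gEquiv s hs).symm y)) =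
      cN5R x y + (s * (x 1 * y 3 - x 3 * y 1)) • (Pi.single 5 1 : Fin 6 → ℝ) := by
  funext i
  fin_cases i <;>
    (try simp [gEquiv, gLin, cA, cN5R, Pi.single_apply]) <;> (try field_simp) <;> (try ring)

/-- the Lie algebra `(0,0,0,0,12,14+23)` degenerates to `n₅ ⊕ ℝ`: there is a
family `gₛ ∈ GL(6,ℝ)` with `gₛ · c → c̃` as `s → 0⁺`. -/
theorem A_degenerates_to_n5R :
    ∃ g : ℝ → ((Fin 6 → ℝ) ≃ₗ[ℝ] (Fin 6 → ℝ)),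
      ∀ x y : Fin 6 → ℝ,
        Filter.Tendsto (fun s : ℝ => g s (cA ((g s).symm x) ((g s).symm y)))
          (nhdsWithin 0 (Set.Ioi 0)) (nhds (cN5R x y)) := by
  refine ⟨fun s => if h : s = 0 then gEquiv 1 one_ne_zero else gEquiv s h, fun x y => ?_⟩
  have hcongr : ∀ᶠ s in nhdsWithin (0:ℝ) (Set.Ioi 0),
      (fun s : ℝ => (if h : s = 0 then gEquiv 1 one_ne_zero else gEquiv s h)
          (cA (((if h : s = 0 then gEquiv 1 one_ne_zero else gEquiv s h)).symm x)
              (((if h : s = 0 then gEquiv 1 one_ne_zero else gEquiv s h)).symm y))) s =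
      cN5R x y + (s * (x 1 * y 3 - x 3 * y 1)) • (Pi.single 5 1 : Fin 6 → ℝ) := by
    filter_upwards [self_mem_nhdsWithin] with s hs
    have hs' : s ≠ 0 := ne_of_gt hs
    simp only [dif_neg hs']
    exact gEquiv_key s hs' x y
  refine Filter.Tendsto.congr' (Filter.EventuallyEq.symm hcongr) ?_
  have h0 : Filter.Tendsto (fun s : ℝ => (s * (x 1 * y 3 - x 3 * y 1)) •
      (Pi.single 5 1 : Fin 6 → ℝ)) (nhdsWithin 0 (Set.Ioi 0)) (nhds 0) := by
    have : Filter.Tendsto (fun s : ℝ => s) (nhdsWithin (0:ℝ) (Set.Ioi 0)) (nhds 0) :=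
      Filter.tendsto_id.mono_left nhdsWithin_le_nhds
    have := ((this.mul_const (x 1 * y 3 - x 3 * y 1)).smul_const
      (Pi.single 5 1 : Fin 6 → ℝ))
    simpa using this
  simpa using (tendsto_const_nhds.add h0)
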